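/- arXiv:2002.00266 — 2 statements merged into one kernel-verified Lean document; each statement's English description precedes it below -/
import Mathlib

section
/- Let k be a field and let B be an associative unital k-algebra equipped with an ℕ-grading, given by k-submodules 𝒜 n of B (n ∈ ℕ) such that B is the internal direct sum of the 𝒜 n, 1 ∈ 𝒜 0, and 𝒜 m · 𝒜 n ⊆ 𝒜 (m+n). If B is finite-dimensional over k and B is a semisimple ring, then B is concentrated in degree zero: 𝒜 n = 0 for every n ≥ 1. -/
/-!
The elements of positive degree form a left ideal `J`, since a product is at least as deep in
the grading as its right factor. In a semisimple ring `J = B e` for an idempotent `e ∈ J`, and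
then `e = eⁿ` lies in degree `≥ n` for every `n`. An element has only finitely many homogeneous
components, so `e = 0`, hence `J = 0`.
-/

section DegreeAtLeast

variable {R A : Type*} [CommSemiring R] [Semiring A] [Algebra R A] (𝒜 : ℕ → Submodule R A)

def degreeAtLeast (p : ℕ) : Submodule R A := ⨆ n, ⨆ (_ : p ≤ n), 𝒜 n

variable {𝒜}

theorem le_degreeAtLeast {p n : ℕ} (h : p ≤ n) : 𝒜 n ≤ degreeAtLeast 𝒜 p :=
  le_iSup₂_of_le n h le_rfl

theorem degreeAtLeast_antitone : Antitone (degreeAtLeast 𝒜) := fun _ _ hpq =>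
  iSup₂_le fun _ hqn => le_degreeAtLeast (hpq.trans hqn)

theorem degreeAtLeast_zero : degreeAtLeast 𝒜 0 = ⨆ n, 𝒜 n := by
  simp [degreeAtLeast]

theorem degreeAtLeast_mul_le [SetLike.GradedMul 𝒜] (p q : ℕ) :
    degreeAtLeast 𝒜 p * degreeAtLeast 𝒜 q ≤ degreeAtLeast 𝒜 (p + q) := by
  simp only [degreeAtLeast, Submodule.iSup_mul, Submodule.mul_iSup]
  refine iSup₂_le fun m hm => iSup₂_le fun n hn => ?_
  exact (Submodule.mul_le.mpr fun x hx y hy => SetLike.mul_mem_graded hx hy).trans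
    (le_degreeAtLeast (add_le_add hn hm))

theorem mul_mem_degreeAtLeast [SetLike.GradedMul 𝒜] (htop : ⨆ n, 𝒜 n = ⊤) (a : A) {p : ℕ}
    {x : A} (hx : x ∈ degreeAtLeast 𝒜 p) : a * x ∈ degreeAtLeast 𝒜 p := by
  have ha : a ∈ degreeAtLeast 𝒜 0 := degreeAtLeast_zero (𝒜 := 𝒜) ▸ htop ▸ Submodule.mem_top
  simpa using degreeAtLeast_mul_le 0 p (Submodule.mul_mem_mul ha hx)

theorem IsIdempotentElem.mem_degreeAtLeast [SetLike.GradedMul 𝒜] {e : A}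
    (he : IsIdempotentElem e) (he1 : e ∈ degreeAtLeast 𝒜 1) (p : ℕ) : e ∈ degreeAtLeast 𝒜 p := by
  induction p with
  | zero => exact degreeAtLeast_antitone zero_le_one he1
  | succ p ih => exact he ▸ degreeAtLeast_mul_le p 1 (Submodule.mul_mem_mul ih he1)

def degreeAtLeastIdeal [SetLike.GradedMul 𝒜] (htop : ⨆ n, 𝒜 n = ⊤) (p : ℕ) : Ideal A where
  toAddSubmonoid := (degreeAtLeast 𝒜 p).toAddSubmonoid
  smul_mem' a _ hx := mul_mem_degreeAtLeast htop a hx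

end DegreeAtLeast

section DegreeAtLeastRing

variable {R A : Type*} [CommRing R] [Ring A] [Algebra R A] {𝒜 : ℕ → Submodule R A}

theorem iInf_degreeAtLeast_eq_bot (hind : iSupIndep 𝒜) : ⨅ p, degreeAtLeast 𝒜 p = ⊥ := by
  refine eq_bot_iff.mpr fun x hx => ?_
  have hx0 : x ∈ ⨆ n, 𝒜 n := degreeAtLeast_zero (𝒜 := 𝒜) ▸ (Submodule.mem_iInf _).mp hx 0
  obtain ⟨s, hxs⟩ := Submodule.mem_iSup_iff_exists_finset.mp hx0
  have hdisj : Disjoint (⨆ n ∈ (s : Set ℕ), 𝒜 n) (degreeAtLeast 𝒜 (s.sup id + 1)) :=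
    hind.disjoint_biSup_biSup (t := {n | s.sup id + 1 ≤ n}) <|
      Set.disjoint_left.mpr fun _ hn hle => not_lt_of_ge (Finset.le_sup (f := id) hn) hle
  exact (Submodule.disjoint_def.mp hdisj) x (by simpa using hxs)
    ((Submodule.mem_iInf _).mp hx _)

theorem IsIdempotentElem.eq_zero_of_mem_degreeAtLeast_one [SetLike.GradedMul 𝒜]
    (hind : iSupIndep 𝒜) {e : A} (he : IsIdempotentElem e) (he1 : e ∈ degreeAtLeast 𝒜 1) :
    e = 0 := by
  have : e ∈ ⨅ p, degreeAtLeast 𝒜 p := (Submodule.mem_iInf _).mpr (he.mem_degreeAtLeast he1)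
  rwa [iInf_degreeAtLeast_eq_bot hind] at this

end DegreeAtLeastRing

theorem semisimple_graded_concentrated_in_degree_zero_general
    (k : Type*) [Field k] (B : Type*) [Ring B] [Algebra k B]
    (𝒜 : ℕ → Submodule k B)
    (hinternal : DirectSum.IsInternal 𝒜)
    (hmul : ∀ m n : ℕ, ∀ x ∈ 𝒜 m, ∀ y ∈ 𝒜 n, x * y ∈ 𝒜 (m + n))
    (hss : IsSemisimpleRing B) :
    ∀ n : ℕ, 1 ≤ n → 𝒜 n = ⊥ := by
  intro n hn
  have : SetLike.GradedMul 𝒜 := ⟨fun _ _ _ _ hx hy => hmul _ _ _ hx _ hy⟩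
  set J := degreeAtLeastIdeal hinternal.submodule_iSup_eq_top 1
  obtain ⟨e, he, hJ⟩ := IsSemisimpleRing.ideal_eq_span_idempotent J
  have heJ : e ∈ J := hJ ▸ Ideal.mem_span_singleton_self e
  have hJ_bot : J = ⊥ := by
    rw [hJ, he.eq_zero_of_mem_degreeAtLeast_one hinternal.submodule_iSupIndep heJ,
      Ideal.span_singleton_eq_bot]
  exact eq_bot_iff.mpr fun x hx => (Submodule.mem_bot B).mp <| hJ_bot ▸ le_degreeAtLeast hn hx

/-- Let `k` be a field and `B` an associative unital `k`-algebra with an ℕ-grading given by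
`k`-submodules `𝒜 n` such that `B` is the internal direct sum of the `𝒜 n`, `1 ∈ 𝒜 0`,
and `𝒜 m * 𝒜 n ⊆ 𝒜 (m + n)`.  If `B` is finite-dimensional over `k` and `B` is a
semisimple ring, then `B` is concentrated in degree zero: `𝒜 n = 0` for all `n ≥ 1`. -/
theorem semisimple_graded_concentrated_in_degree_zero
    (k : Type*) [Field k] (B : Type*) [Ring B] [Algebra k B]
    (𝒜 : ℕ → Submodule k B)
    (hinternal : DirectSum.IsInternal 𝒜)
    (hone : (1 : B) ∈ 𝒜 0)
    (hmul : ∀ m n : ℕ, ∀ x ∈ 𝒜 m, ∀ y ∈ 𝒜 n, x * y ∈ 𝒜 (m + n))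
    (hfd : FiniteDimensional k B)
    (hss : IsSemisimpleRing B) :
    ∀ n : ℕ, 1 ≤ n → 𝒜 n = ⊥ :=
  semisimple_graded_concentrated_in_degree_zero_general k B 𝒜 hinternal hmul hss
end

section
/- Let R be a commutative ring, R' a commutative R-algebra that is flat as an R-module, and M an R-module that is the union of a directed family of submodules (M_λ)_{λ ∈ Λ}, i.e., the family is directed under inclusion and ⨆_λ M_λ = M. If the R'-module R' ⊗_R M is finitely generated, then there exists an index λ such that the natural map R' ⊗_R M_λ → R' ⊗_R M (induced by the inclusion M_λ ⊆ M) is an isomorphism. -/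
/-!
Inside `R' ⊗[R] M` the images `R' ⊗[R] M_λ` form a directed family of `R'`-submodules whose
supremum is everything, since base change commutes with suprema. A finitely generated module is a
compact element of its lattice of submodules, so one of these images is already everything; and
flatness of `R'` makes the map `R' ⊗[R] M_λ → R' ⊗[R] M` injective.
-/

open TensorProduct

theorem IsCompactElement.exists_le_of_directed_le_iSup {α ι : Type*} [CompleteLattice α]
    [Nonempty ι] {k : α} (hk : IsCompactElement k) {f : ι → α} (hf : Directed (· ≤ ·) f)
    (h : k ≤ ⨆ i, f i) : ∃ i, k ≤ f i := by
  obtain ⟨-, ⟨i, rfl⟩, hi⟩ :=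
    (CompleteLattice.isCompactElement_iff_le_of_directed_sSup_le α k).1 hk (Set.range f)
      (Set.range_nonempty f) hf.directedOn_range (by rwa [sSup_range])
  exact ⟨i, hi⟩

theorem Submodule.exists_eq_top_of_directed_of_iSup_eq_top {R M ι : Type*} [Semiring R]
    [AddCommMonoid M] [Module R M] [Module.Finite R M] [Nonempty ι] {p : ι → Submodule R M}
    (hdir : Directed (· ≤ ·) p) (hsup : ⨆ i, p i = ⊤) : ∃ i, p i = ⊤ := by
  obtain ⟨i, hi⟩ := ((fg_iff_compact ⊤).1 Module.Finite.fg_top).exists_le_of_directed_le_iSup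
    hdir hsup.ge
  exact ⟨i, top_le_iff.1 hi⟩

theorem Submodule.baseChange_iSup {R A M ι : Type*} [CommSemiring R] [Semiring A] [Algebra R A]
    [AddCommMonoid M] [Module R M] (p : ι → Submodule R M) :
    (⨆ i, p i).baseChange A = ⨆ i, (p i).baseChange A := by
  simp_rw [baseChange_eq_span, map_iSup, iSup_eq_span, span_span_of_tower, span_iUnion, span_eq]

theorem Submodule.lTensor_subtype_bijective_of_baseChange_eq_top {R A M : Type*} [CommSemiring R]
    [Semiring A] [Algebra R A] [Module.Flat R A] [AddCommMonoid M] [Module R M]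
    {p : Submodule R M} (hp : p.baseChange A = ⊤) : Function.Bijective (p.subtype.lTensor A) :=
  ⟨Module.Flat.lTensor_preserves_injective_linearMap _ p.injective_subtype,
    by rw [← LinearMap.baseChange_eq_ltensor]; exact LinearMap.range_eq_top.1 hp⟩

/-- Let `R'` be a flat commutative `R`-algebra and `M` an `R`-module that is the directed
union of a family of submodules `(M_λ)`.  If `R' ⊗[R] M` is a finitely generated
`R'`-module, then there is an index `λ` such that the natural map
`R' ⊗[R] M_λ → R' ⊗[R] M` is an isomorphism. -/
theorem finite_tensor_factors_through_stage
    (R R' : Type*) [CommRing R] [CommRing R'] [Algebra R R'] [Module.Flat R R']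
    (M : Type*) [AddCommGroup M] [Module R M]
    (Λ : Type*) [Nonempty Λ] (Mf : Λ → Submodule R M)
    (hdir : Directed (· ≤ ·) Mf) (hsup : ⨆ l, Mf l = ⊤)
    [Module.Finite R' (R' ⊗[R] M)] :
    ∃ l : Λ, Function.Bijective (LinearMap.lTensor R' (Mf l).subtype) := by
  obtain ⟨l, hl⟩ := Submodule.exists_eq_top_of_directed_of_iSup_eq_top
    (p := fun l => (Mf l).baseChange R')
    (hdir.mono_comp (· ≤ ·) fun _ _ => Submodule.baseChange_mono (M := M) R')
    (by rw [← Submodule.baseChange_iSup, hsup, Submodule.baseChange_top])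
  exact ⟨l, Submodule.lTensor_subtype_bijective_of_baseChange_eq_top hl⟩
end
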